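/- arXiv:2202.05245 — 3 statements merged into one kernel-verified Lean document; each statement's English description precedes it below -/
import Mathlib

section
/- Let x be a random covariate, d ∈ {0,1} a treatment indicator with propensity score p(d=1|x) ∈ (0,1), and y₁, y₀ potential outcomes with y = 1[d=1]y₁ + 1[d=0]y₀. Under unconfoundedness ({y₁,y₀} ⫫ d | x), the inverse-probability-weighted outcome ŷ = 1[d=1]y/p(d=1|x) − 1[d=0]y/(1−p(d=1|x)) satisfies E[ŷ | x] = E[y₁|x] − E[y₀|x]. -/
/-!
Conditional independence of `y₁` and `d` given `x` means that under almost every regular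
conditional probability `condExpKernel μ mX ω` the two are independent, so the integral of
`1[d=1] y₁` factorises there: `E[1[d=1] y₁ | x] = e(x) E[y₁ | x]`. Since the propensity
score is `x`-measurable, dividing by it commutes with `E[· | x]`, which gives
`E[1[d=1] y₁ / e(x) | x] = E[y₁ | x]`; the control arm is the same argument with
`1 - e(x) = P(d = 0 | x)`.
-/

open MeasureTheory ProbabilityTheory

theorem MeasureTheory.condExp_indicator_compl_ae_eq {Ω : Type*} {m mΩ : MeasurableSpace Ω}
    (hm : m ≤ mΩ) {μ : Measure Ω} [IsFiniteMeasure μ] {s : Set Ω} (hs : MeasurableSet s) :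
    μ⟦sᶜ | m⟧ =ᵐ[μ] 1 - μ⟦s | m⟧ := by
  rw [Set.indicator_compl]
  refine (condExp_sub (integrable_const _) ((integrable_const _).indicator hs) m).trans ?_
  rw [condExp_const hm]
  rfl

namespace ProbabilityTheory

variable {Ω γ : Type*} {m mΩ : MeasurableSpace Ω} [StandardBorelSpace Ω]
  {hm : m ≤ mΩ} {μ : Measure Ω} [IsFiniteMeasure μ] [MeasurableSpace γ] {g : Ω → γ}

theorem CondIndepFun.ae_indepFun_condExpKernel {β : Type*} [MeasurableSpace β]
    [MeasurableSpace.CountableOrCountablyGenerated Ω (β × γ)] {f : Ω → β}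
    (hf : Measurable f) (hg : Measurable g)
    (h : CondIndepFun m hm f g μ) :
    ∀ᵐ ω ∂μ, IndepFun f g (condExpKernel μ m ω) := by
  have := (condIndepFun_iff_map_prod_eq_prod_map_map hf hg).1 h
  filter_upwards [ae_of_ae_trim hm this] with ω hω
  rw [indepFun_iff_map_prod_eq_prod_map_map hf.aemeasurable hg.aemeasurable]
  simpa [Kernel.map_apply _ (hf.prodMk hg), Kernel.prod_apply, Kernel.map_apply _ hf,
    Kernel.map_apply _ hg] using hω

theorem CondIndepFun.condExp_indicator_ae_eq_mul
    [MeasurableSpace.CountableOrCountablyGenerated Ω (ℝ × γ)]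
    {f : Ω → ℝ} (hf : Measurable f) (hg : Measurable g) (hfi : Integrable f μ)
    (h : CondIndepFun m hm f g μ) {t : Set γ} (ht : MeasurableSet t) :
    μ[(g ⁻¹' t).indicator f | m] =ᵐ[μ] μ⟦g ⁻¹' t | m⟧ * μ[f | m] := by
  have h1 : Measurable (t.indicator (1 : γ → ℝ)) := measurable_one.indicator ht
  have hsplit : (g ⁻¹' t).indicator f = (t.indicator 1 ∘ g) * f := by
    ext ω; by_cases h : g ω ∈ t <;> simp [Set.indicator, h]
  filter_upwards [h.ae_indepFun_condExpKernel hf hg,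
    condExp_ae_eq_integral_condExpKernel hm (hfi.indicator (hg ht)),
    condExpKernel_ae_eq_condExp hm (hg ht), condExp_ae_eq_integral_condExpKernel hm hfi]
    with ω hind hcond hprob hcondf
  have hind' : IndepFun (t.indicator 1 ∘ g) f (condExpKernel μ m ω) :=
    (hind.comp measurable_id h1).symm
  rw [hcond, Pi.mul_apply, ← hprob, hcondf, hsplit, hind'.integral_mul_eq_mul_integral
    (h1.comp hg).aestronglyMeasurable hf.aestronglyMeasurable]
  simp [← Set.indicator_comp_right, integral_indicator_one (hg ht)]

theorem CondIndepFun.condExp_indicator_div_ae_eq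
    [MeasurableSpace.CountableOrCountablyGenerated Ω (ℝ × γ)]
    {f : Ω → ℝ} (hf : Measurable f) (hg : Measurable g) (hfi : Integrable f μ)
    (h : CondIndepFun m hm f g μ) {t : Set γ} (ht : MeasurableSet t)
    {p : Ω → ℝ} (hp : p =ᵐ[μ] μ⟦g ⁻¹' t | m⟧) (hp0 : ∀ᵐ ω ∂μ, p ω ≠ 0)
    (hint : Integrable (fun ω ↦ (g ⁻¹' t).indicator f ω / p ω) μ) :
    μ[fun ω ↦ (g ⁻¹' t).indicator f ω / p ω | m] =ᵐ[μ] μ[f | m] := by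
  -- `p` itself need not be `m`-measurable, so pull out its version `q` instead.
  set q := μ⟦g ⁻¹' t | m⟧
  have hq : StronglyMeasurable[m] q⁻¹ :=
    (stronglyMeasurable_condExp (m := m)).measurable.inv.stronglyMeasurable
  have hweight :
      (fun ω ↦ (g ⁻¹' t).indicator f ω / p ω) =ᵐ[μ] q⁻¹ * (g ⁻¹' t).indicator f := by
    filter_upwards [hp] with ω hω
    simp [hω, div_eq_inv_mul]
  calc μ[fun ω ↦ (g ⁻¹' t).indicator f ω / p ω | m]
      =ᵐ[μ] μ[q⁻¹ * (g ⁻¹' t).indicator f | m] := condExp_congr_ae hweight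
    _ =ᵐ[μ] q⁻¹ * μ[(g ⁻¹' t).indicator f | m] :=
      condExp_mul_of_stronglyMeasurable_left hq (hint.congr hweight) (hfi.indicator (hg ht))
    _ =ᵐ[μ] q⁻¹ * (q * μ[f | m]) := (h.condExp_indicator_ae_eq_mul hf hg hfi ht).mul_left
    _ =ᵐ[μ] μ[f | m] := by
      filter_upwards [hp, hp0] with ω hω hω0
      rw [hω] at hω0
      exact inv_mul_cancel_left₀ hω0 _

end ProbabilityTheory

theorem stmt0_general {Ω : Type*} [m0 : MeasurableSpace Ω] [StandardBorelSpace Ω]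
    (μ : Measure Ω) [IsProbabilityMeasure μ]
    (d : Ω → Bool) (y₁ y₀ : Ω → ℝ)
    (hd : Measurable d) (hy₁ : Measurable y₁) (hy₀ : Measurable y₀)
    (hy₁int : Integrable y₁ μ) (hy₀int : Integrable y₀ μ)
    (mX : MeasurableSpace Ω)
    (hle : mX ≤ m0)
    (hunconf : CondIndepFun mX hle (fun ω => (y₁ ω, y₀ ω)) d μ)
    (e : Ω → ℝ)
    (he_cond : e =ᵐ[μ] μ[fun ω => if d ω then (1 : ℝ) else 0 | mX])
    (he_pos : ∀ ω, 0 < e ω) (he_lt : ∀ ω, e ω < 1)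
    (y yh : Ω → ℝ)
    (hy : y = fun ω => if d ω then y₁ ω else y₀ ω)
    (hyh : yh = fun ω =>
      (if d ω then y ω / e ω else 0) - (if d ω then 0 else y ω / (1 - e ω)))
    (hyhint : Integrable yh μ) :
    μ[yh|mX] =ᵐ[μ] μ[y₁|mX] - μ[y₀|mX] := by
  set treated := d ⁻¹' {true}
  set control := d ⁻¹' {false}
  have htreated : MeasurableSet[m0] treated := hd (measurableSet_singleton true)
  have hcontrol : control = treatedᶜ := by ext ω; simp [treated, control]
  have he : e =ᵐ[μ] μ⟦treated | mX⟧ := by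
    convert he_cond using 3 with ω
    cases hω : d ω <;> simp [treated, hω]
  have he' : 1 - e =ᵐ[μ] μ⟦control | mX⟧ := by
    rw [hcontrol]
    exact ((Filter.EventuallyEq.refl _ 1).sub he).trans
      (condExp_indicator_compl_ae_eq hle htreated).symm
  have hsplit : yh = (fun ω ↦ treated.indicator y₁ ω / e ω) -
      (fun ω ↦ control.indicator y₀ ω / (1 - e ω)) := by
    subst hyh hy; ext ω; cases hω : d ω <;> simp [treated, control, hω]
  have hint_treated : Integrable (fun ω ↦ treated.indicator y₁ ω / e ω) μ := by
    refine (hyhint.indicator htreated).congr (.of_forall fun ω ↦ ?_)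
    subst hyh hy; cases hω : d ω <;> simp [treated, hω]
  have hint_control : Integrable (fun ω ↦ control.indicator y₀ ω / (1 - e ω)) μ := by
    refine (hyhint.indicator htreated.compl).neg.congr (.of_forall fun ω ↦ ?_)
    subst hyh hy; cases hω : d ω <;> simp [treated, control, hω]
  rw [hsplit]
  refine (condExp_sub hint_treated hint_control mX).trans (.sub ?_ ?_)
  · exact (hunconf.comp measurable_fst measurable_id).condExp_indicator_div_ae_eq hy₁ hd hy₁int
      (measurableSet_singleton true) he (.of_forall fun ω ↦ (he_pos ω).ne') hint_treated
  · exact (hunconf.comp measurable_snd measurable_id).condExp_indicator_div_ae_eq hy₀ hd hy₀int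
      (measurableSet_singleton false) he' (.of_forall fun ω ↦ (sub_pos.2 (he_lt ω)).ne')
      hint_control

/-- under unconfoundedness (`{y₁,y₀} ⫫ d | x`) and overlap
(`0 < e(x) < 1` for the propensity score `e(x) = P(d=1|x)`, realized as the conditional
expectation of the treatment indicator given the σ-algebra `mX` generated by `x`), the
IPW-corrected outcome `ŷ = 1[d=1]y/e(x) − 1[d=0]y/(1−e(x))` with
`y = 1[d=1]y₁ + 1[d=0]y₀` satisfies `E[ŷ|x] = E[y₁|x] − E[y₀|x]`. -/
theorem stmt0 {Ω : Type*} [m0 : MeasurableSpace Ω] [StandardBorelSpace Ω] [Nonempty Ω]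
    {H : Type*} [MeasurableSpace H]
    (μ : Measure Ω) [IsProbabilityMeasure μ]
    (x : Ω → H) (d : Ω → Bool) (y₁ y₀ : Ω → ℝ)
    (hx : Measurable x) (hd : Measurable d) (hy₁ : Measurable y₁) (hy₀ : Measurable y₀)
    (hy₁int : Integrable y₁ μ) (hy₀int : Integrable y₀ μ)
    (mX : MeasurableSpace Ω) (hmX : mX = MeasurableSpace.comap x inferInstance)
    (hle : mX ≤ m0)
    (hunconf : CondIndepFun mX hle (fun ω => (y₁ ω, y₀ ω)) d μ)
    (e : Ω → ℝ)
    (he_cond : e =ᵐ[μ] μ[fun ω => if d ω then (1 : ℝ) else 0 | mX])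
    (he_pos : ∀ ω, 0 < e ω) (he_lt : ∀ ω, e ω < 1)
    (y yh : Ω → ℝ)
    (hy : y = fun ω => if d ω then y₁ ω else y₀ ω)
    (hyh : yh = fun ω =>
      (if d ω then y ω / e ω else 0) - (if d ω then 0 else y ω / (1 - e ω)))
    (hyhint : Integrable yh μ) :
    μ[yh|mX] =ᵐ[μ] μ[y₁|mX] - μ[y₀|mX] :=
  stmt0_general (m0 := m0) μ d y₁ y₀ hd hy₁ hy₀ hy₁int hy₀int mX hle hunconf e he_cond he_pos he_lt
    y yh hy hyh hyhint
end

section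
/- Let Z ∈ ℝ^{n×k} with k < n and A ∈ ℝ^{n×n} invertible such that ZZᵀ + A is invertible. Then Zᵀ(ZZᵀ + A)⁻²Z = (I + ZᵀA⁻¹Z)⁻¹ ZᵀA⁻²Z (I + ZᵀA⁻¹Z)⁻¹. -/
open Matrix

/-- For `Z ∈ ℝ^{n×k}` with `k < n` and invertible `A ∈ ℝ^{n×n}` with
`ZZᵀ + A` invertible, `Zᵀ(ZZᵀ + A)⁻²Z = (I + ZᵀA⁻¹Z)⁻¹ ZᵀA⁻²Z (I + ZᵀA⁻¹Z)⁻¹`. -/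
theorem stmt10 {n k : ℕ} (hk : k < n)
    (A : Matrix (Fin n) (Fin n) ℝ) (Z : Matrix (Fin n) (Fin k) ℝ)
    (hA : IsUnit A.det) (hZA : IsUnit (Z * Zᵀ + A).det) :
    Zᵀ * ((Z * Zᵀ + A)⁻¹ * (Z * Zᵀ + A)⁻¹) * Z =
      (1 + Zᵀ * A⁻¹ * Z)⁻¹ * (Zᵀ * (A⁻¹ * A⁻¹) * Z) * (1 + Zᵀ * A⁻¹ * Z)⁻¹ := by
  set M := Z * Zᵀ + A with hM
  set B := 1 + Zᵀ * A⁻¹ * Z with hB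
  have hAA : A * A⁻¹ = 1 := Matrix.mul_nonsing_inv A hA
  have hAA' : A⁻¹ * A = 1 := Matrix.nonsing_inv_mul A hA
  have hMM : M * M⁻¹ = 1 := Matrix.mul_nonsing_inv M hZA
  have hMM' : M⁻¹ * M = 1 := Matrix.nonsing_inv_mul M hZA
  -- invertibility of B via Weinstein–Aronszajn
  have hBdet : IsUnit B.det := by
    have h1 : B = 1 + Zᵀ * (A⁻¹ * Z) := by rw [hB, Matrix.mul_assoc]
    have h2 : B.det = (1 + (A⁻¹ * Z) * Zᵀ).det := by
      rw [h1, Matrix.det_one_add_mul_comm]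
    have h3 : 1 + (A⁻¹ * Z) * Zᵀ = A⁻¹ * M := by
      rw [hM, Matrix.mul_add, hAA', Matrix.mul_assoc, add_comm]
    rw [h2, h3, Matrix.det_mul]
    exact (Matrix.isUnit_nonsing_inv_det A hA).mul hZA
  have hBB : B * B⁻¹ = 1 := Matrix.mul_nonsing_inv B hBdet
  have hBB' : B⁻¹ * B = 1 := Matrix.nonsing_inv_mul B hBdet
  -- key identity 1
  have key1 : B * Zᵀ = Zᵀ * A⁻¹ * M := by
    rw [hB, hM]
    simp only [Matrix.add_mul, Matrix.mul_add, Matrix.one_mul, Matrix.mul_assoc,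
      hAA', Matrix.mul_one]
    exact add_comm _ _
  have left : Zᵀ * M⁻¹ = B⁻¹ * (Zᵀ * A⁻¹) := by
    have h := congrArg (fun X => B⁻¹ * X * M⁻¹) key1
    simp only [Matrix.mul_assoc, hMM, Matrix.mul_one] at h
    rwa [← Matrix.mul_assoc, hBB', Matrix.one_mul] at h
  -- key identity 2
  have key2 : Z * B = M * (A⁻¹ * Z) := by
    rw [hB, hM]
    simp only [Matrix.add_mul, Matrix.mul_add, Matrix.mul_one, Matrix.mul_assoc,
      ← Matrix.mul_assoc A A⁻¹, hAA, Matrix.one_mul]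
    exact add_comm _ _
  have right : M⁻¹ * Z = A⁻¹ * (Z * B⁻¹) := by
    have h := congrArg (fun X => M⁻¹ * X * B⁻¹) key2
    simp only [Matrix.mul_assoc, hBB, Matrix.mul_one] at h
    rwa [← Matrix.mul_assoc, hMM', Matrix.one_mul] at h
  calc Zᵀ * (M⁻¹ * M⁻¹) * Z = (Zᵀ * M⁻¹) * (M⁻¹ * Z) := by
        simp only [Matrix.mul_assoc]
    _ = (B⁻¹ * (Zᵀ * A⁻¹)) * (A⁻¹ * (Z * B⁻¹)) := by rw [left, right]
    _ = B⁻¹ * (Zᵀ * (A⁻¹ * A⁻¹) * Z) * B⁻¹ := by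
        simp only [Matrix.mul_assoc]
end

section
/- Let b ≥ 1, let λ₁ ≥ λ₂ ≥ ... > 0 be summable, and let k* = min{k ≥ 0 : r_k(Σ) ≥ bn} be finite. Then min over m ≤ k* of [ m/(bn) + bn·(Σ_{i>m}λ_i²)/(λ_{k*+1} r_{k*}(Σ))² ] is attained at m = k*, and equals k*/(bn) + bn/R_{k*}(Σ), where r_k(Σ) = (Σ_{i>k}λ_i)/λ_{k+1} and R_k(Σ) = (Σ_{i>k}λ_i)²/(Σ_{i>k}λ_i²). -/
lemma tail_split18 (f : ℕ → ℝ) (hf : Summable f) {m k : ℕ} (h : m ≤ k) :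
    (∑' i, f (m + i)) = ∑ j ∈ Finset.Ico m k, f j + ∑' i, f (k + i) := by
  have hfm : Summable fun i => f (m + i) := by
    simpa [add_comm] using (summable_nat_add_iff m).mpr hf
  have h1 := Summable.sum_add_tsum_nat_add (f := fun i => f (m + i)) (k - m) hfm
  have h2 : ∀ i, m + (i + (k - m)) = k + i := fun i => by omega
  have h3 : (∑' i, f (m + (i + (k - m)))) = ∑' i, f (k + i) := by
    exact tsum_congr fun i => by rw [h2]
  rw [h3] at h1
  rw [← h1, Finset.sum_Ico_eq_sum_range]

theorem stmt18 (l : ℕ → ℝ) (hpos : ∀ i, 0 < l i) (hmono : Antitone l)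
    (hsum : Summable l) (n : ℕ) (hn : 0 < n) (b : ℝ) (hb : 1 ≤ b) (kstar : ℕ)
    (hkstar : IsLeast {k : ℕ | b * n ≤ (∑' i, l (k + i)) / l k} kstar) :
    (∀ m ≤ kstar,
        (kstar : ℝ) / (b * n) +
            b * n * (∑' i, (l (kstar + i)) ^ 2) /
              (l kstar * ((∑' i, l (kstar + i)) / l kstar)) ^ 2 ≤
          (m : ℝ) / (b * n) +
            b * n * (∑' i, (l (m + i)) ^ 2) /
              (l kstar * ((∑' i, l (kstar + i)) / l kstar)) ^ 2) ∧
      (kstar : ℝ) / (b * n) +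
          b * n * (∑' i, (l (kstar + i)) ^ 2) /
            (l kstar * ((∑' i, l (kstar + i)) / l kstar)) ^ 2 =
        (kstar : ℝ) / (b * n) +
          b * n / ((∑' i, l (kstar + i)) ^ 2 / (∑' i, (l (kstar + i)) ^ 2)) := by
  have hbn : (0 : ℝ) < b * n := by
    have : (1 : ℝ) ≤ n := by exact_mod_cast hn
    nlinarith
  set c : ℝ := ∑' i, l (kstar + i) with hc_def
  have hcancel : l kstar * (c / l kstar) = c := by
    rw [mul_comm]; exact div_mul_cancel₀ c (hpos kstar).ne'
  have hsq : Summable fun i => (l i) ^ 2 := by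
    apply Summable.of_nonneg_of_le (fun i => sq_nonneg _) (fun i => ?_)
      (hsum.mul_left (l 0))
    have h1 : l i ≤ l 0 := hmono (Nat.zero_le i)
    have h2 : 0 < l i := hpos i
    nlinarith
  -- tail positivity
  have htail_pos : ∀ k : ℕ, 0 < ∑' i, l (k + i) := by
    intro k
    have : Summable fun i => l (k + i) := by
      simpa [add_comm] using (summable_nat_add_iff k).mpr hsum
    exact Summable.tsum_pos this (fun i => (hpos _).le) 0 (hpos _)
  have hc_pos : 0 < c := htail_pos kstar
  have hsqtail : ∀ k : ℕ, Summable fun i => (l (k + i)) ^ 2 := by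
    intro k
    simpa [add_comm] using (summable_nat_add_iff k).mpr hsq
  have hSk_pos : 0 < ∑' i, (l (kstar + i)) ^ 2 :=
    Summable.tsum_pos (hsqtail kstar) (fun i => sq_nonneg _) 0 (pow_pos (hpos _) 2)
  constructor
  · intro m hm
    rw [hcancel]
    -- decompose the m-tail of squares
    have hsplit : (∑' i, (l (m + i)) ^ 2)
        = ∑ j ∈ Finset.Ico m kstar, (l j) ^ 2 + ∑' i, (l (kstar + i)) ^ 2 :=
      tail_split18 (fun i => (l i) ^ 2) hsq hm
    set S : ℝ := ∑' i, (l (kstar + i)) ^ 2 with hS_def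
    set D : ℝ := ∑ j ∈ Finset.Ico m kstar, (l j) ^ 2 with hD_def
    -- for each j < kstar, c^2 ≤ (b*n)^2 * l j ^ 2
    have hterm : ∀ j ∈ Finset.Ico m kstar, c ^ 2 / (b * n) ^ 2 ≤ (l j) ^ 2 := by
      intro j hj
      rw [Finset.mem_Ico] at hj
      have hjlt : j < kstar := hj.2
      have hnotin : j ∉ {k : ℕ | b * n ≤ (∑' i, l (k + i)) / l k} := by
        intro hmem
        exact absurd (hkstar.2 hmem) (by omega)
      have hlt : (∑' i, l (j + i)) / l j < b * n := lt_of_not_ge hnotin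
      have hTj : c ≤ ∑' i, l (j + i) := by
        rw [tail_split18 l hsum hjlt.le]
        have : 0 ≤ ∑ j' ∈ Finset.Ico j kstar, l j' :=
          Finset.sum_nonneg fun j' _ => (hpos j').le
        linarith
      have hlj : c < b * n * l j := by
        have := (div_lt_iff₀ (hpos j)).mp hlt
        linarith
      rw [div_le_iff₀ (by positivity)]
      nlinarith [hpos j, hc_pos]
    have hDge : ((kstar : ℝ) - m) * (c ^ 2 / (b * n) ^ 2) ≤ D := by
      have hcard := Finset.sum_le_sum hterm
      have : (Finset.Ico m kstar).card = kstar - m := Nat.card_Ico m kstar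
      rw [Finset.sum_const, this] at hcard
      have hcast : ((kstar - m : ℕ) : ℝ) = (kstar : ℝ) - m := by
        have := hm
        push_cast [Nat.cast_sub hm]
        ring
      rw [nsmul_eq_mul, hcast] at hcard
      exact hcard
    rw [hsplit]
    have hkey : ((kstar : ℝ) - m) * c ^ 2 ≤ (b * n) ^ 2 * D := by
      have h1 : ((kstar : ℝ) - m) * (c ^ 2 / (b * n) ^ 2) * (b * n) ^ 2
          ≤ D * (b * n) ^ 2 := by
        apply mul_le_mul_of_nonneg_right hDge (by positivity)
      have h2 : ((kstar : ℝ) - m) * (c ^ 2 / (b * n) ^ 2) * (b * n) ^ 2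
          = ((kstar : ℝ) - m) * c ^ 2 := by
        field_simp
      linarith [h1, h2.symm.le]
    rw [div_add_div _ _ hbn.ne' (pow_ne_zero 2 hc_pos.ne'),
      div_add_div _ _ hbn.ne' (pow_ne_zero 2 hc_pos.ne'),
      div_le_div_iff₀ (by positivity) (by positivity)]
    nlinarith [mul_le_mul_of_nonneg_right hkey
      (le_of_lt (mul_pos hbn (pow_pos hc_pos 2))), hSk_pos, hbn, hc_pos]
  · rw [hcancel]
    congr 1
    rw [div_div_eq_mul_div]
end
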